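/- Suppose {E_{C_m}T_{Bn}g}_{m∈ℤ, n∈ℤ^d} is a K-Weyl-Heisenberg frame for L²(ℝ^d) with bounds A and B, and {E_{C_m}}_{m∈ℤ} is a frame for L²([0,τ]^d) with bounds A₀, B₀ for some τ > 0. Then Σ_{n∈ℤ^d}|g(t−Bn)|² ≤ (B/A₀)‖K‖² for almost every t ∈ ℝ^d. -/

import Mathlib

open MeasureTheory

/-- The Gabor (Weyl–Heisenberg) system element `E_C T_b g`. -/
noncomputable def gaborFn11 {d : ℕ} (C b : EuclideanSpace ℝ (Fin d))
    (g : EuclideanSpace ℝ (Fin d) → ℂ) : EuclideanSpace ℝ (Fin d) → ℂ :=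
  fun t => Complex.exp (2 * Real.pi * Complex.I * ((inner ℝ C t : ℝ) : ℂ)) * g (t - b)

/-! Testing the upper bound of the `K`-frame against `f = 1_E`, for a set `E` inside a translate
of the cube `[0,τ]^d`, turns `⟨f, E_{C_m} T_{Bn} g⟩` into the `m`-th exponential coefficient of
`h_n = 1_E · conj g(· - Bn)`, a function supported in that cube. The exponentials remain a frame
for `L²` of every translate of the cube, so summing their lower bounds over `n` gives
`A₀ ∫_E Σ_n |g(t - Bn)|² dt ≤ Σ_{m,n} |⟨f, E_{C_m} T_{Bn} g⟩|² ≤ B ‖K‖² |E|`.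
Countably many translated cubes cover `ℝ^d`, and a bound of all these set integrals by
`(B/A₀)‖K‖² |E|` forces the pointwise bound almost everywhere. -/

open Set
open scoped ENNReal ComplexConjugate Pointwise

section ExpFrame

variable {V : Type*} [NormedAddCommGroup V] [InnerProductSpace ℝ V]

noncomputable def expInner (C t : V) : ℂ :=
  Complex.exp (2 * Real.pi * Complex.I * ((inner ℝ C t : ℝ) : ℂ))

lemma expInner_add (C s t : V) : expInner C (s + t) = expInner C s * expInner C t := by
  rw [expInner, expInner, expInner, ← Complex.exp_add, inner_add_right, Complex.ofReal_add,
    mul_add]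

lemma norm_expInner (C t : V) : ‖expInner C t‖ = 1 := by
  rw [expInner, ← Complex.norm_exp_ofReal_mul_I (2 * Real.pi * inner ℝ C t)]
  push_cast
  ring_nf

variable [MeasurableSpace V] {μ : Measure V} {ι : Type*} {C : ι → V} {A0 B0 : ℝ} {S : Set V}

variable (μ) in
noncomputable def expCoeff (C : V) (h : V → ℂ) : ℂ :=
  ∫ t, h t * conj (expInner C t) ∂μ

lemma norm_expCoeff_comp_add_left [MeasurableAdd V] [μ.IsAddLeftInvariant] (C t₀ : V)
    (h : V → ℂ) : ‖expCoeff μ C (fun s => h (t₀ + s))‖ = ‖expCoeff μ C h‖ := by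
  have hshift :
      expCoeff μ C h = expCoeff μ C (fun s => h (t₀ + s)) * conj (expInner C t₀) := by
    rw [expCoeff, expCoeff, ← integral_add_left_eq_self _ t₀, ← integral_mul_const]
    simp only [expInner_add, map_mul, mul_comm (conj (expInner C t₀)), mul_assoc]
  rw [hshift, norm_mul, Complex.norm_conj, norm_expInner, mul_one]

variable (μ) in
def IsExpFrameOn (C : ι → V) (A0 B0 : ℝ) (S : Set V) : Prop :=
  ∀ h : V → ℂ, MemLp h 2 μ → (∀ t ∉ S, h t = 0) →
    A0 * ∫ t, ‖h t‖ ^ 2 ∂μ ≤ ∑' m, ‖expCoeff μ (C m) h‖ ^ 2 ∧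
      ∑' m, ‖expCoeff μ (C m) h‖ ^ 2 ≤ B0 * ∫ t, ‖h t‖ ^ 2 ∂μ

lemma IsExpFrameOn.vadd [MeasurableAdd V] [μ.IsAddLeftInvariant]
    (hF : IsExpFrameOn μ C A0 B0 S) (t₀ : V) : IsExpFrameOn μ C A0 B0 (t₀ +ᵥ S) := by
  intro h hh hsupp
  have hshift := hF (fun s => h (t₀ + s))
    (hh.comp_measurePreserving (measurePreserving_add_left μ t₀))
    fun s hs => hsupp _ (vadd_mem_vadd_set_iff.not.mpr hs)
  simpa only [norm_expCoeff_comp_add_left, integral_add_left_eq_self (fun t => ‖h t‖ ^ 2)]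
    using hshift

lemma IsExpFrameOn.summable (hF : IsExpFrameOn μ C A0 B0 S) (hA0 : 0 < A0) {h : V → ℂ}
    (hh : MemLp h 2 μ) (hsupp : ∀ t ∉ S, h t = 0) :
    Summable fun m => ‖expCoeff μ (C m) h‖ ^ 2 := by
  have hint : Integrable (fun t => ‖h t‖ ^ 2) μ := hh.integrable_norm_pow two_ne_zero
  rcases (integral_nonneg fun t => by positivity : 0 ≤ ∫ t, ‖h t‖ ^ 2 ∂μ).eq_or_lt
    with h0 | hpos
  · have hzero : h =ᵐ[μ] 0 := by
      filter_upwards [(integral_eq_zero_iff_of_nonneg (fun t => by positivity) hint).mp h0.symm]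
        with t ht
      simpa using ht
    have hcoeff (m : ι) : expCoeff μ (C m) h = 0 := by
      refine integral_eq_zero_of_ae ?_
      filter_upwards [hzero] with t ht
      simp [ht]
    simp [hcoeff]
  · -- a non-summable series has `tsum = 0`, which the lower frame bound rules out
    by_contra hns
    have hlower := (hF h hh hsupp).1
    rw [tsum_eq_zero_of_not_summable hns] at hlower
    exact (mul_pos hA0 hpos).not_ge hlower

section Family

variable {κ : Type*} {h : κ → V → ℂ}

lemma IsExpFrameOn.summable_prod (hF : IsExpFrameOn μ C A0 B0 S) (hA0 : 0 < A0)
    (hmem : ∀ n, MemLp (h n) 2 μ) (hsupp : ∀ n, ∀ t ∉ S, h n t = 0)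
    (hsum : Summable fun n => ∫ t, ‖h n t‖ ^ 2 ∂μ) :
    Summable fun p : ι × κ => ‖expCoeff μ (C p.1) (h p.2)‖ ^ 2 := by
  have hrows : Summable fun n => ∑' m, ‖expCoeff μ (C m) (h n)‖ ^ 2 :=
    Summable.of_nonneg_of_le (fun _ => tsum_nonneg fun _ => sq_nonneg _)
      (fun n => (hF (h n) (hmem n) (hsupp n)).2) (hsum.mul_left B0)
  have hswap : Summable fun q : κ × ι => ‖expCoeff μ (C q.2) (h q.1)‖ ^ 2 := by
    refine (summable_prod_of_nonneg fun _ => sq_nonneg _).mpr ⟨fun n => ?_, ?_⟩ <;> simp only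
    exacts [hF.summable hA0 (hmem n) (hsupp n), hrows]
  exact hswap.prod_symm

lemma IsExpFrameOn.mul_tsum_le_tsum_prod (hF : IsExpFrameOn μ C A0 B0 S) (hA0 : 0 < A0)
    (hmem : ∀ n, MemLp (h n) 2 μ) (hsupp : ∀ n, ∀ t ∉ S, h n t = 0)
    (hsum : Summable fun n => ∫ t, ‖h n t‖ ^ 2 ∂μ) :
    A0 * ∑' n, ∫ t, ‖h n t‖ ^ 2 ∂μ ≤ ∑' p : ι × κ, ‖expCoeff μ (C p.1) (h p.2)‖ ^ 2 := by
  have hswap : Summable fun q : κ × ι => ‖expCoeff μ (C q.2) (h q.1)‖ ^ 2 := by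
    simpa only [Prod.fst_swap, Prod.snd_swap] using
      (hF.summable_prod hA0 hmem hsupp hsum).prod_symm
  calc A0 * ∑' n, ∫ t, ‖h n t‖ ^ 2 ∂μ = ∑' n, A0 * ∫ t, ‖h n t‖ ^ 2 ∂μ :=
        tsum_mul_left.symm
    _ ≤ ∑' n, ∑' m, ‖expCoeff μ (C m) (h n)‖ ^ 2 :=
      (hsum.mul_left A0).tsum_le_tsum (fun n => (hF (h n) (hmem n) (hsupp n)).1) hswap.prod
    _ = ∑' p : ι × κ, ‖expCoeff μ (C p.1) (h p.2)‖ ^ 2 := by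
      rw [← (Equiv.prodComm κ ι).tsum_eq]
      simp only [Equiv.prodComm_apply, Prod.fst_swap, Prod.snd_swap]
      rw [hswap.tsum_prod]

end Family

end ExpFrame

section Window

variable {V : Type*} [MeasurableSpace V] {μ : Measure V} {E : Set V}

lemma integral_norm_sq_indicator_conj (hE : MeasurableSet E) {f : V → ℂ}
    (hf : AEStronglyMeasurable f μ) :
    ∫ t, ‖E.indicator (fun s => conj (f s)) t‖ ^ 2 ∂μ = (∫⁻ t in E, ‖f t‖ₑ ^ 2 ∂μ).toReal := by
  rw [integral_eq_lintegral_of_nonneg_ae (.of_forall fun _ => by positivity)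
    (by exact (hf.star.indicator hE).norm.pow 2), ← lintegral_indicator hE]
  congr 2 with t
  by_cases ht : t ∈ E <;> simp [ht]

lemma MeasureTheory.MemLp.indicator_conj_comp_sub [AddGroup V] [MeasurableAdd V]
    [μ.IsAddRightInvariant] {g : V → ℂ} (hg : MemLp g 2 μ) (hE : MeasurableSet E) (b : V) :
    MemLp (E.indicator fun t => conj (g (t - b))) 2 μ :=
  ((hg.comp_measurePreserving (measurePreserving_sub_right μ b)).star).indicator hE

end Window

lemma integral_indicatorConstLp_mul_conj_gaborFn11 {d : ℕ}
    {μ : Measure (EuclideanSpace ℝ (Fin d))} {E : Set (EuclideanSpace ℝ (Fin d))}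
    (hE : MeasurableSet E) (hμE : μ E ≠ ∞) (C b : EuclideanSpace ℝ (Fin d))
    (g : EuclideanSpace ℝ (Fin d) → ℂ) :
    ∫ t, indicatorConstLp 2 hE hμE (1 : ℂ) t * conj (gaborFn11 C b g t) ∂μ
      = expCoeff μ C (E.indicator fun t => conj (g (t - b))) := by
  refine integral_congr_ae ?_
  filter_upwards [indicatorConstLp_coeFn (p := 2) (hs := hE) (hμs := hμE) (c := (1 : ℂ))]
    with t ht
  rw [ht]
  by_cases htE : t ∈ E <;> simp [htE, gaborFn11, expInner, mul_comm]

section Gabor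

variable {d : ℕ} {ι κ : Type*}
  {K : Lp ℂ 2 (volume : Measure (EuclideanSpace ℝ (Fin d))) →L[ℂ]
    Lp ℂ 2 (volume : Measure (EuclideanSpace ℝ (Fin d)))}
  {C : ι → EuclideanSpace ℝ (Fin d)} {b : κ → EuclideanSpace ℝ (Fin d)}
  {g : EuclideanSpace ℝ (Fin d) → ℂ} {B : ℝ} {E : Set (EuclideanSpace ℝ (Fin d))}

lemma tsum_norm_sq_expCoeff_indicator_le (hB : 0 ≤ B)
    (hK : ∀ f : Lp ℂ 2 (volume : Measure (EuclideanSpace ℝ (Fin d))),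
      ∑' p : ι × κ, ‖∫ t, f t * conj (gaborFn11 (C p.1) (b p.2) g t)‖ ^ 2 ≤ B * ‖K f‖ ^ 2)
    (hE : MeasurableSet E) (hμE : volume E ≠ ∞) :
    ∑' p : ι × κ, ‖expCoeff volume (C p.1) (E.indicator fun t => conj (g (t - b p.2)))‖ ^ 2
      ≤ B * ‖K‖ ^ 2 * volume.real E := by
  set f := indicatorConstLp 2 hE hμE (1 : ℂ)
  have hf : ‖f‖ ^ 2 = volume.real E := by
    rw [norm_indicatorConstLp two_ne_zero ENNReal.ofNat_ne_top, norm_one, one_mul,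
      ← Real.rpow_natCast, ← Real.rpow_mul measureReal_nonneg]
    norm_num
  calc _ = ∑' p : ι × κ, ‖∫ t, f t * conj (gaborFn11 (C p.1) (b p.2) g t)‖ ^ 2 := by
        simp only [f, integral_indicatorConstLp_mul_conj_gaborFn11]
    _ ≤ B * ‖K f‖ ^ 2 := hK f
    _ ≤ B * (‖K‖ * ‖f‖) ^ 2 := by gcongr; exact K.le_opNorm f
    _ = B * ‖K‖ ^ 2 * volume.real E := by rw [mul_pow, hf, mul_assoc]

lemma setLIntegral_tsum_enorm_sq_le [Countable κ] {A0 B0 : ℝ}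
    {S : Set (EuclideanSpace ℝ (Fin d))} (hg : MemLp g 2 volume) (hA0 : 0 < A0) (hB : 0 ≤ B)
    (hF : IsExpFrameOn volume C A0 B0 S)
    (hK : ∀ f : Lp ℂ 2 (volume : Measure (EuclideanSpace ℝ (Fin d))),
      ∑' p : ι × κ, ‖∫ t, f t * conj (gaborFn11 (C p.1) (b p.2) g t)‖ ^ 2 ≤ B * ‖K f‖ ^ 2)
    (hE : MeasurableSet E) (hES : E ⊆ S) (hμE : volume E ≠ ∞)
    (hfin : ∫⁻ t in E, ∑' n, ‖g (t - b n)‖ₑ ^ 2 ≠ ∞) :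
    ∫⁻ t in E, ∑' n, ‖g (t - b n)‖ₑ ^ 2 ≤ ENNReal.ofReal (B / A0 * ‖K‖ ^ 2) * volume E := by
  have hmeas (n : κ) : AEStronglyMeasurable (fun t => g (t - b n)) volume :=
    hg.1.comp_measurePreserving (measurePreserving_sub_right _ _)
  rw [lintegral_tsum fun n => (hmeas n).enorm.pow_const 2 |>.restrict] at hfin ⊢
  have hnorm (n : κ) := integral_norm_sq_indicator_conj (μ := volume) hE (hmeas n)
  have hsum : Summable fun n => ∫ t, ‖E.indicator (fun s => conj (g (s - b n))) t‖ ^ 2 := by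
    simpa only [hnorm] using ENNReal.summable_toReal hfin
  have hreal :
      A0 * (∑' n, ∫⁻ t in E, ‖g (t - b n)‖ₑ ^ 2).toReal ≤ B * ‖K‖ ^ 2 * volume.real E := by
    rw [ENNReal.tsum_toReal_eq fun n => ne_top_of_le_ne_top hfin (ENNReal.le_tsum n),
      ← tsum_congr hnorm]
    refine (hF.mul_tsum_le_tsum_prod hA0 (fun n => hg.indicator_conj_comp_sub hE (b n))
      (fun n t ht => indicator_of_notMem (fun htE => ht (hES htE)) _) hsum).trans ?_
    exact tsum_norm_sq_expCoeff_indicator_le hB hK hE hμE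
  rw [← ENNReal.ofReal_toReal hfin, ← ENNReal.ofReal_toReal hμE,
    ← ENNReal.ofReal_mul (by positivity)]
  refine ENNReal.ofReal_le_ofReal ?_
  rw [div_mul_eq_mul_div, div_mul_eq_mul_div, le_div_iff₀ hA0]
  simpa only [mul_comm, measureReal_def] using hreal

end Gabor

section AEBound

variable {α : Type*} [MeasurableSpace α] {μ : Measure α} {G : α → ℝ≥0∞} {c : ℝ≥0∞}

lemma measure_eq_zero_of_setLIntegral_le {s : Set α} (hs : MeasurableSet s) (hμs : μ s ≠ ∞)
    (hG : Measurable G) (hc : c ≠ ∞) (hlt : ∀ x ∈ s, c < G x)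
    (hle : ∫⁻ x in s, G x ∂μ ≤ c * μ s) : μ s = 0 := by
  by_contra h0
  have hstrict := setLIntegral_strict_mono (f := fun _ => c) hs h0 hG
    (by rw [setLIntegral_const]; exact ENNReal.mul_ne_top hc hμs) (.of_forall hlt)
  rw [setLIntegral_const] at hstrict
  exact (hstrict.trans_le hle).false

lemma ae_le_of_forall_setLIntegral_le_of_cover {ι : Type*} [Countable ι] {Q : ι → Set α}
    (hQ : ∀ x, ∃ j, x ∈ Q j) (hQm : ∀ j, MeasurableSet (Q j)) (hQfin : ∀ j, μ (Q j) ≠ ∞)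
    (hG : AEMeasurable G μ) (hc : c ≠ ∞)
    (h : ∀ s, MeasurableSet s → (∃ j, s ⊆ Q j) → ∫⁻ x in s, G x ∂μ ≠ ∞ →
      ∫⁻ x in s, G x ∂μ ≤ c * μ s) :
    ∀ᵐ x ∂μ, G x ≠ ∞ → G x ≤ c := by
  obtain ⟨G', hG', hGG'⟩ : ∃ G', Measurable G' ∧ G =ᵐ[μ] G' :=
    ⟨hG.mk G, hG.measurable_mk, hG.ae_eq_mk⟩
  set P : ι → ℕ → Set α := fun j q => Q j ∩ G' ⁻¹' Ioc c q
  have hnull (j : ι) (q : ℕ) : μ (P j q) = 0 := by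
    have hPm : MeasurableSet (P j q) := (hQm j).inter (hG' measurableSet_Ioc)
    have hμP : μ (P j q) ≠ ∞ := ne_top_of_le_ne_top (hQfin j) (measure_mono inter_subset_left)
    have hint : ∫⁻ x in P j q, G x ∂μ = ∫⁻ x in P j q, G' x ∂μ :=
      lintegral_congr_ae (ae_restrict_of_ae hGG')
    have hbdd : ∫⁻ x in P j q, G' x ∂μ ≤ q * μ (P j q) := by
      simpa only [setLIntegral_const] using
        setLIntegral_mono (f := G') measurable_const fun x hx => hx.2.2
    refine measure_eq_zero_of_setLIntegral_le hPm hμP hG' hc (fun x hx => hx.2.1) ?_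
    rw [← hint]
    refine h _ hPm ⟨j, inter_subset_left⟩ ?_
    exact hint ▸ ne_top_of_le_ne_top (ENNReal.mul_ne_top (ENNReal.natCast_ne_top q) hμP) hbdd
  have hout : ∀ᵐ x ∂μ, x ∉ ⋃ j, ⋃ q : ℕ, P j q :=
    measure_eq_zero_iff_ae_notMem.mp (measure_iUnion_null fun j => measure_iUnion_null (hnull j))
  filter_upwards [hGG', hout] with x hx hxP hfin
  by_contra hlt
  obtain ⟨j, hj⟩ := hQ x
  obtain ⟨q, hq⟩ := ENNReal.exists_nat_gt hfin
  refine hxP (mem_iUnion₂.mpr ⟨j, q, hj, ?_⟩)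
  rw [mem_preimage, ← hx]
  exact ⟨not_le.mp hlt, hq.le⟩

end AEBound

lemma tsum_norm_sq_le_of_tsum_enorm_sq_le {κ F : Type*} [NormedAddCommGroup F] {f : κ → F}
    {c : ℝ} (hc : 0 ≤ c) (h : ∑' n, ‖f n‖ₑ ^ 2 ≠ ∞ → ∑' n, ‖f n‖ₑ ^ 2 ≤ ENNReal.ofReal c) :
    ∑' n, ‖f n‖ ^ 2 ≤ c := by
  have hreal : ∑' n, ‖f n‖ ^ 2 = (∑' n, ‖f n‖ₑ ^ 2).toReal := by
    rw [ENNReal.tsum_toReal_eq fun n => by simp]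
    simp only [ENNReal.toReal_pow, toReal_enorm]
  rw [hreal]
  by_cases hfin : ∑' n, ‖f n‖ₑ ^ 2 = ∞
  · simpa [hfin] using hc
  · exact ENNReal.toReal_le_of_le_ofReal hc (h hfin)

section Cube

variable {d : ℕ}

def cube (d : ℕ) (τ : ℝ) : Set (EuclideanSpace ℝ (Fin d)) := {t | ∀ i, t i ∈ Icc 0 τ}

lemma isCompact_cube (τ : ℝ) : IsCompact (cube d τ) := by
  have hpi : cube d τ = EuclideanSpace.equiv (Fin d) ℝ ⁻¹' univ.pi fun _ => Icc 0 τ := by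
    ext t
    simp [cube, Pi.le_def, forall_and]
  rw [hpi]
  exact (EuclideanSpace.equiv (Fin d) ℝ).toHomeomorph.isCompact_preimage.mpr
    (isCompact_univ_pi fun _ => isCompact_Icc)

lemma exists_mem_vadd_cube {τ : ℝ} (hτ : 0 < τ) (t : EuclideanSpace ℝ (Fin d)) :
    ∃ j : Fin d → ℤ, t ∈ WithLp.toLp 2 (fun i => τ * j i) +ᵥ cube d τ := by
  refine ⟨fun i => ⌊t i / τ⌋, mem_vadd_set_iff_neg_vadd_mem.mpr fun i => ?_⟩
  have hle := (le_div_iff₀ hτ).mp (Int.floor_le (t i / τ))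
  have hlt := (div_lt_iff₀ hτ).mp (Int.lt_floor_add_one (t i / τ))
  simp only [vadd_eq_add, PiLp.add_apply, PiLp.neg_apply, mem_Icc]
  constructor <;> linarith

end Cube

theorem stmt_11_general {d : ℕ}
    (K : Lp ℂ 2 (volume : Measure (EuclideanSpace ℝ (Fin d))) →L[ℂ]
         Lp ℂ 2 (volume : Measure (EuclideanSpace ℝ (Fin d))))
    (C : ℤ → EuclideanSpace ℝ (Fin d))
    (Bmat : EuclideanSpace ℝ (Fin d) ≃L[ℝ] EuclideanSpace ℝ (Fin d))
    (g : EuclideanSpace ℝ (Fin d) → ℂ)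
    (hgmem : MemLp g 2 (volume : Measure (EuclideanSpace ℝ (Fin d))))
    (A B A0 B0 τ : ℝ) (hB : 0 < B) (hA0 : 0 < A0) (hτ : 0 < τ)
    -- `{E_{C_m}}` is a frame for `L²([0,τ]^d)` with bounds `A₀, B₀`
    (hframe : ∀ h : EuclideanSpace ℝ (Fin d) → ℂ,
      MemLp h 2 (volume : Measure (EuclideanSpace ℝ (Fin d))) →
      (∀ t : EuclideanSpace ℝ (Fin d), (∃ i, t i ∉ Set.Icc (0 : ℝ) τ) → h t = 0) →
      A0 * ∫ t, ‖h t‖ ^ 2 ≤ (∑' m : ℤ, ‖∫ t, h t * (starRingEnd ℂ)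
          (Complex.exp (2 * Real.pi * Complex.I * ((inner ℝ (C m) t : ℝ) : ℂ)))‖ ^ 2) ∧
      (∑' m : ℤ, ‖∫ t, h t * (starRingEnd ℂ)
          (Complex.exp (2 * Real.pi * Complex.I * ((inner ℝ (C m) t : ℝ) : ℂ)))‖ ^ 2)
        ≤ B0 * ∫ t, ‖h t‖ ^ 2)
    -- `{E_{C_m}T_{Bn}g}` is a `K`-Weyl–Heisenberg frame with bounds `A, B`
    (hKWH : ∀ f : Lp ℂ 2 (volume : Measure (EuclideanSpace ℝ (Fin d))),
      A * ‖K.adjoint f‖ ^ 2 ≤ (∑' p : ℤ × (Fin d → ℤ),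
          ‖∫ t, f t * (starRingEnd ℂ)
            (gaborFn11 (C p.1) (Bmat (WithLp.toLp 2 (fun i => ((p.2 i : ℝ))))) g t)‖ ^ 2) ∧
      (∑' p : ℤ × (Fin d → ℤ),
          ‖∫ t, f t * (starRingEnd ℂ)
            (gaborFn11 (C p.1) (Bmat (WithLp.toLp 2 (fun i => ((p.2 i : ℝ))))) g t)‖ ^ 2)
        ≤ B * ‖K f‖ ^ 2) :
    ∀ᵐ t : EuclideanSpace ℝ (Fin d) ∂volume,
      (∑' n : Fin d → ℤ, ‖g (t - Bmat (WithLp.toLp 2 (fun i => (n i : ℝ))))‖ ^ 2) ≤ (B / A0) * ‖K‖ ^ 2 := by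
  let b : (Fin d → ℤ) → EuclideanSpace ℝ (Fin d) := fun n =>
    Bmat (WithLp.toLp 2 fun i => (n i : ℝ))
  have hF : IsExpFrameOn volume C A0 B0 (cube d τ) := fun h hh hsupp =>
    hframe h hh fun t ⟨i, hi⟩ => hsupp t fun ht => hi (ht i)
  have hK : ∀ f : Lp ℂ 2 (volume : Measure (EuclideanSpace ℝ (Fin d))),
      ∑' p : ℤ × (Fin d → ℤ), ‖∫ t, f t * conj (gaborFn11 (C p.1) (b p.2) g t)‖ ^ 2
        ≤ B * ‖K f‖ ^ 2 := fun f => (hKWH f).2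
  have hG : AEMeasurable (fun t => ∑' n, ‖g (t - b n)‖ₑ ^ 2) volume :=
    AEMeasurable.tsum fun n =>
      (hgmem.1.comp_measurePreserving (measurePreserving_sub_right volume (b n))).enorm.pow_const 2
  have hbound : ∀ᵐ t ∂volume, ∑' n, ‖g (t - b n)‖ₑ ^ 2 ≠ ∞ →
      ∑' n, ‖g (t - b n)‖ₑ ^ 2 ≤ ENNReal.ofReal (B / A0 * ‖K‖ ^ 2) := by
    have hQ : ∀ j : Fin d → ℤ, volume (WithLp.toLp 2 (fun i => τ * j i) +ᵥ cube d τ) < ∞ :=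
      fun j => by rw [measure_vadd]; exact (isCompact_cube τ).measure_lt_top
    refine ae_le_of_forall_setLIntegral_le_of_cover (exists_mem_vadd_cube hτ)
      (fun j => (isCompact_cube τ).measurableSet.const_vadd _) (fun j => (hQ j).ne) hG
      ENNReal.ofReal_ne_top fun s hs ⟨j, hsj⟩ hfin => ?_
    exact setLIntegral_tsum_enorm_sq_le hgmem hA0 hB.le (hF.vadd _) hK hs hsj
      (ne_top_of_le_ne_top (hQ j).ne (measure_mono hsj)) hfin
  filter_upwards [hbound] with t ht
  exact tsum_norm_sq_le_of_tsum_enorm_sq_le (by positivity) ht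

/-- necessary condition on `g` for `{E_{C_m}T_{Bn}g}` to be a
`K`-Weyl–Heisenberg frame: `Σ_n |g(t−Bn)|² ≤ (B/A₀)‖K‖²` a.e. -/
theorem stmt_11 {d : ℕ}
    (K : Lp ℂ 2 (volume : Measure (EuclideanSpace ℝ (Fin d))) →L[ℂ]
         Lp ℂ 2 (volume : Measure (EuclideanSpace ℝ (Fin d))))
    (C : ℤ → EuclideanSpace ℝ (Fin d))
    (Bmat : EuclideanSpace ℝ (Fin d) ≃L[ℝ] EuclideanSpace ℝ (Fin d))
    (g : EuclideanSpace ℝ (Fin d) → ℂ)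
    (hgmem : MemLp g 2 (volume : Measure (EuclideanSpace ℝ (Fin d))))
    (A B A0 B0 τ : ℝ) (hA : 0 < A) (hB : 0 < B) (hA0 : 0 < A0) (hB0 : 0 < B0) (hτ : 0 < τ)
    -- `{E_{C_m}}` is a frame for `L²([0,τ]^d)` with bounds `A₀, B₀`
    (hframe : ∀ h : EuclideanSpace ℝ (Fin d) → ℂ,
      MemLp h 2 (volume : Measure (EuclideanSpace ℝ (Fin d))) →
      (∀ t : EuclideanSpace ℝ (Fin d), (∃ i, t i ∉ Set.Icc (0 : ℝ) τ) → h t = 0) →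
      A0 * ∫ t, ‖h t‖ ^ 2 ≤ (∑' m : ℤ, ‖∫ t, h t * (starRingEnd ℂ)
          (Complex.exp (2 * Real.pi * Complex.I * ((inner ℝ (C m) t : ℝ) : ℂ)))‖ ^ 2) ∧
      (∑' m : ℤ, ‖∫ t, h t * (starRingEnd ℂ)
          (Complex.exp (2 * Real.pi * Complex.I * ((inner ℝ (C m) t : ℝ) : ℂ)))‖ ^ 2)
        ≤ B0 * ∫ t, ‖h t‖ ^ 2)
    -- `{E_{C_m}T_{Bn}g}` is a `K`-Weyl–Heisenberg frame with bounds `A, B`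
    (hKWH : ∀ f : Lp ℂ 2 (volume : Measure (EuclideanSpace ℝ (Fin d))),
      A * ‖K.adjoint f‖ ^ 2 ≤ (∑' p : ℤ × (Fin d → ℤ),
          ‖∫ t, f t * (starRingEnd ℂ)
            (gaborFn11 (C p.1) (Bmat (WithLp.toLp 2 (fun i => ((p.2 i : ℝ))))) g t)‖ ^ 2) ∧
      (∑' p : ℤ × (Fin d → ℤ),
          ‖∫ t, f t * (starRingEnd ℂ)
            (gaborFn11 (C p.1) (Bmat (WithLp.toLp 2 (fun i => ((p.2 i : ℝ))))) g t)‖ ^ 2)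
        ≤ B * ‖K f‖ ^ 2) :
    ∀ᵐ t : EuclideanSpace ℝ (Fin d) ∂volume,
      (∑' n : Fin d → ℤ, ‖g (t - Bmat (WithLp.toLp 2 (fun i => (n i : ℝ))))‖ ^ 2) ≤ (B / A0) * ‖K‖ ^ 2 :=
  stmt_11_general K C Bmat g hgmem A B A0 B0 τ hB hA0 hτ hframe hKWH
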